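/- arXiv:2110.06285 — 14 statements merged into one kernel-verified Lean document; each statement's English description precedes it below -/
import Mathlib

section
/- Let b ≥ 0 and let m1, m0 : ℝ → ℝ satisfy the smoothness assumption with constant b on [0,1]. Let 0 ≤ p' < p ≤ 1 and v* ∈ [0,1], and set ΔY := ∫_{p'}^{p} (m1(v) − m0(v)) dv and I := ∫_{p'}^{p} 2b·|v − v*| dv. Then (ΔY − I)/(p − p') ≤ m1(v*) − m0(v*) ≤ (ΔY + I)/(p − p'). -/
/-- Partial identification of the MTE without misreporting: with
`ΔY = ∫_{p'}^{p} (m1 - m0)` and `I = ∫_{p'}^{p} 2b|v - v*|`, we have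
`(ΔY - I)/(p - p') ≤ MTE(v*) ≤ (ΔY + I)/(p - p')`. -/
theorem mte_bounds_no_misreporting
    (b : ℝ) (hb : 0 ≤ b) (m1 m0 : ℝ → ℝ)
    (hm1 : ∀ v1 ∈ Set.Icc (0:ℝ) 1, ∀ v2 ∈ Set.Icc (0:ℝ) 1, |m1 v1 - m1 v2| ≤ b * |v1 - v2|)
    (hm0 : ∀ v1 ∈ Set.Icc (0:ℝ) 1, ∀ v2 ∈ Set.Icc (0:ℝ) 1, |m0 v1 - m0 v2| ≤ b * |v1 - v2|)
    (p' p : ℝ) (hp' : 0 ≤ p') (hpp : p' < p) (hp : p ≤ 1)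
    (vstar : ℝ) (hv : vstar ∈ Set.Icc (0:ℝ) 1)
    (ΔY I : ℝ) (hΔY : ΔY = ∫ v in p'..p, (m1 v - m0 v))
    (hI : I = ∫ v in p'..p, 2 * b * |v - vstar|) :
    (ΔY - I) / (p - p') ≤ m1 vstar - m0 vstar ∧
      m1 vstar - m0 vstar ≤ (ΔY + I) / (p - p') := by
  have hsub : Set.Icc p' p ⊆ Set.Icc (0:ℝ) 1 := Set.Icc_subset_Icc hp' hp
  set c := m1 vstar - m0 vstar with hc
  have hcont : ∀ (m : ℝ → ℝ),
      (∀ v1 ∈ Set.Icc (0:ℝ) 1, ∀ v2 ∈ Set.Icc (0:ℝ) 1, |m v1 - m v2| ≤ b * |v1 - v2|) →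
      ContinuousOn m (Set.Icc (0:ℝ) 1) := by
    intro m hm
    have : LipschitzOnWith (Real.toNNReal b) m (Set.Icc (0:ℝ) 1) := by
      intro x hx y hy
      have hd : dist (m x) (m y) ≤ b * dist x y := by
        simpa [Real.dist_eq] using hm x hx y hy
      rw [edist_dist, edist_dist]
      show ENNReal.ofReal (dist (m x) (m y)) ≤ ENNReal.ofReal b * ENNReal.ofReal (dist x y)
      calc ENNReal.ofReal (dist (m x) (m y)) ≤ ENNReal.ofReal (b * dist x y) :=
            ENNReal.ofReal_le_ofReal hd
        _ = ENNReal.ofReal b * ENNReal.ofReal (dist x y) := ENNReal.ofReal_mul hb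
    exact this.continuousOn
  have hc1 : ContinuousOn (fun v => m1 v - m0 v - c) (Set.Icc p' p) :=
    (((hcont m1 hm1).sub (hcont m0 hm0)).sub continuousOn_const).mono hsub
  have hint1 : IntervalIntegrable (fun v => m1 v - m0 v - c) MeasureTheory.volume p' p := by
    apply ContinuousOn.intervalIntegrable
    rwa [Set.uIcc_of_le hpp.le]
  have hint2 : IntervalIntegrable (fun v => 2 * b * |v - vstar|) MeasureTheory.volume p' p :=
    Continuous.intervalIntegrable
      (continuous_const.mul ((continuous_id.sub continuous_const).abs)) p' p
  have hint0 : IntervalIntegrable (fun v => m1 v - m0 v) MeasureTheory.volume p' p := by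
    have := hint1.add (intervalIntegrable_const (c := c))
    simpa using this
  have hkey : |ΔY - c * (p - p')| ≤ I := by
    have heq : ΔY - c * (p - p') = ∫ v in p'..p, (m1 v - m0 v - c) := by
      rw [hΔY, intervalIntegral.integral_sub hint0 intervalIntegrable_const,
        intervalIntegral.integral_const]
      simp [smul_eq_mul]; ring
    rw [heq]
    calc |∫ v in p'..p, (m1 v - m0 v - c)| ≤ ∫ v in p'..p, |m1 v - m0 v - c| :=
          intervalIntegral.abs_integral_le_integral_abs hpp.le
      _ ≤ ∫ v in p'..p, 2 * b * |v - vstar| := by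
          apply intervalIntegral.integral_mono_on hpp.le
          · exact hint1.abs
          · exact hint2
          · intro x hx
            have hx1 : x ∈ Set.Icc (0:ℝ) 1 := hsub hx
            have h1 := hm1 x hx1 vstar hv
            have h0 := hm0 x hx1 vstar hv
            calc |m1 x - m0 x - c| = |(m1 x - m1 vstar) - (m0 x - m0 vstar)| := by
                  rw [hc]; ring_nf
              _ ≤ |m1 x - m1 vstar| + |m0 x - m0 vstar| := abs_sub _ _
              _ ≤ b * |x - vstar| + b * |x - vstar| := add_le_add h1 h0
              _ = 2 * b * |x - vstar| := by ring
      _ = I := hI.symm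
  have hd : 0 < p - p' := by linarith
  rw [abs_le] at hkey
  constructor
  · rw [div_le_iff₀ hd]; nlinarith [hkey.1]
  · rw [le_div_iff₀ hd]; nlinarith [hkey.2]
end

section
/- Let b ≥ 0 and let m1, m0 : ℝ → ℝ satisfy the smoothness assumption with constant b on [0,1]. Let 0 ≤ p' < p ≤ 1 and set ΔY := ∫_{p'}^{p} (m1(v) − m0(v)) dv. Then ∫_0^1 (m1(v) − m0(v)) dv ≤ ΔY/(p − p') + (2b/3)·(p³ − p'³)/(p − p') − b·(p² − p'²)/(p − p') + b. -/
/-!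
The difference `m1 - m0` is `2b`-Lipschitz, so for every `u ∈ [0,1]` the ATE is at most
`(m1 - m0) u + 2b ∫₀¹ |v - u| dv = (m1 - m0) u + b (u² + (1 - u)²)`. Averaging this bound over
`u ∈ [p', p]` turns the first term into `ΔY / (p - p')` and the second into the stated polynomial.
-/

open Set
open scoped NNReal

theorem integral_abs_sub_of_mem_Icc {a b u : ℝ} (hu : u ∈ Icc a b) :
    ∫ v in a..b, |v - u| = ((u - a) ^ 2 + (b - u) ^ 2) / 2 := by
  have hint : ∀ c d : ℝ, IntervalIntegrable (fun v => |v - u|) MeasureTheory.volume c d :=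
    fun c d => (by fun_prop : Continuous fun v : ℝ => |v - u|).intervalIntegrable c d
  have left : ∫ v in a..u, |v - u| = ∫ v in a..u, (u - v) := by
    refine intervalIntegral.integral_congr fun v hv => ?_
    rw [uIcc_of_le hu.1] at hv
    exact (abs_of_nonpos (by linarith [hv.2])).trans (neg_sub _ _)
  have right : ∫ v in u..b, |v - u| = ∫ v in u..b, (v - u) := by
    refine intervalIntegral.integral_congr fun v hv => ?_
    rw [uIcc_of_le hu.2] at hv
    exact abs_of_nonneg (by linarith [hv.1])
  rw [← intervalIntegral.integral_add_adjacent_intervals (hint a u) (hint u b), left, right,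
    intervalIntegral.integral_comp_sub_left (fun x => x),
    intervalIntegral.integral_comp_sub_right (fun x => x)]
  simp
  ring

theorem integral_sq_sub_add_sq_sub (a b p' p : ℝ) :
    ∫ u in p'..p, ((u - a) ^ 2 + (b - u) ^ 2) / 2 =
      ((p - a) ^ 3 - (p' - a) ^ 3 + (b - p') ^ 3 - (b - p) ^ 3) / 6 := by
  rw [intervalIntegral.integral_div,
    intervalIntegral.integral_add (Continuous.intervalIntegrable (by fun_prop) _ _)
      (Continuous.intervalIntegrable (by fun_prop) _ _),
    intervalIntegral.integral_comp_sub_right (fun x => x ^ 2),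
    intervalIntegral.integral_comp_sub_left (fun x => x ^ 2)]
  simp
  ring

theorem LipschitzOnWith.integral_le_mul_add {f : ℝ → ℝ} {K : ℝ≥0} {a b u : ℝ} (hab : a ≤ b)
    (hf : LipschitzOnWith K f (Icc a b)) (hu : u ∈ Icc a b) :
    ∫ v in a..b, f v ≤ (b - a) * f u + K * (((u - a) ^ 2 + (b - u) ^ 2) / 2) := by
  have hfi : IntervalIntegrable f MeasureTheory.volume a b :=
    hf.continuousOn.intervalIntegrable_of_Icc hab
  have habs : IntervalIntegrable (fun v => K * |v - u|) MeasureTheory.volume a b :=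
    Continuous.intervalIntegrable (by fun_prop) _ _
  calc ∫ v in a..b, f v ≤ ∫ v in a..b, (f u + K * |v - u|) := by
        refine intervalIntegral.integral_mono_on hab hfi (intervalIntegrable_const.add habs)
          fun v hv => ?_
        have := hf.dist_le_mul v hv u hu
        rw [Real.dist_eq, Real.dist_eq] at this
        linarith [le_abs_self (f v - f u)]
    _ = (b - a) * f u + K * (((u - a) ^ 2 + (b - u) ^ 2) / 2) := by
        rw [intervalIntegral.integral_add intervalIntegrable_const habs,
          intervalIntegral.integral_const_mul, integral_abs_sub_of_mem_Icc hu]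
        simp

theorem LipschitzOnWith.mul_integral_le {f : ℝ → ℝ} {K : ℝ≥0} {a b p' p : ℝ}
    (hab : a ≤ b) (hf : LipschitzOnWith K f (Icc a b)) (hp' : a ≤ p') (hpp : p' ≤ p)
    (hp : p ≤ b) :
    (p - p') * ∫ v in a..b, f v ≤ (b - a) * (∫ u in p'..p, f u) +
      K * (((p - a) ^ 3 - (p' - a) ^ 3 + (b - p') ^ 3 - (b - p) ^ 3) / 6) := by
  have hsub : Icc p' p ⊆ Icc a b := Icc_subset_Icc hp' hp
  have hfi : IntervalIntegrable f MeasureTheory.volume p' p :=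
    (hf.mono hsub).continuousOn.intervalIntegrable_of_Icc hpp
  have hsq : IntervalIntegrable (fun u => K * (((u - a) ^ 2 + (b - u) ^ 2) / 2))
      MeasureTheory.volume p' p :=
    Continuous.intervalIntegrable (by fun_prop) _ _
  calc (p - p') * ∫ v in a..b, f v = ∫ _ in p'..p, ∫ v in a..b, f v := by simp
    _ ≤ ∫ u in p'..p, ((b - a) * f u + K * (((u - a) ^ 2 + (b - u) ^ 2) / 2)) :=
        intervalIntegral.integral_mono_on hpp intervalIntegrable_const
          ((hfi.const_mul _).add hsq) fun u hu => hf.integral_le_mul_add hab (hsub hu)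
    _ = _ := by
        rw [intervalIntegral.integral_add (hfi.const_mul _) hsq, intervalIntegral.integral_const_mul,
          intervalIntegral.integral_const_mul, integral_sq_sub_add_sq_sub]

theorem lipschitzOnWith_of_abs_sub_le {f : ℝ → ℝ} {K : ℝ} {s : Set ℝ}
    (hf : ∀ x ∈ s, ∀ y ∈ s, |f x - f y| ≤ K * |x - y|) : LipschitzOnWith K.toNNReal f s :=
  LipschitzOnWith.of_dist_le' fun x hx y hy => by simpa [Real.dist_eq] using hf x hx y hy

/-- Upper bound on the ATE without misreporting under the smoothness assumption:
`ATE ≤ ΔY/(p - p') + (2b/3)(p³ - p'³)/(p - p') - b(p² - p'²)/(p - p') + b`. -/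
theorem ate_upper_bound_no_misreporting
    (b : ℝ) (hb : 0 ≤ b) (m1 m0 : ℝ → ℝ)
    (hm1 : ∀ v1 ∈ Set.Icc (0:ℝ) 1, ∀ v2 ∈ Set.Icc (0:ℝ) 1, |m1 v1 - m1 v2| ≤ b * |v1 - v2|)
    (hm0 : ∀ v1 ∈ Set.Icc (0:ℝ) 1, ∀ v2 ∈ Set.Icc (0:ℝ) 1, |m0 v1 - m0 v2| ≤ b * |v1 - v2|)
    (p' p : ℝ) (hp' : 0 ≤ p') (hpp : p' < p) (hp : p ≤ 1)
    (ΔY : ℝ) (hΔY : ΔY = ∫ v in p'..p, (m1 v - m0 v)) :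
    (∫ v in (0:ℝ)..1, (m1 v - m0 v)) ≤
      ΔY / (p - p') + (2 * b / 3) * (p ^ 3 - p' ^ 3) / (p - p')
        - b * (p ^ 2 - p' ^ 2) / (p - p') + b := by
  have hm : LipschitzOnWith (b.toNNReal + b.toNNReal) (fun v => m1 v - m0 v) (Icc 0 1) :=
    (lipschitzOnWith_of_abs_sub_le hm1).sub (lipschitzOnWith_of_abs_sub_le hm0)
  have key := hm.mul_integral_le zero_le_one hp' hpp.le hp
  rw [← hΔY, NNReal.coe_add, Real.coe_toNNReal b hb] at key
  have hpos : 0 < p - p' := sub_pos.2 hpp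
  have hrhs : ΔY / (p - p') + (2 * b / 3) * (p ^ 3 - p' ^ 3) / (p - p')
        - b * (p ^ 2 - p' ^ 2) / (p - p') + b =
      (ΔY + 2 * b * ((p - 0) ^ 3 - (p' - 0) ^ 3 + (1 - p') ^ 3 - (1 - p) ^ 3) / 6) / (p - p') := by
    field_simp
    ring
  rw [hrhs, le_div_iff₀ hpos]
  linarith
end

section
/- Let (Ω, ℱ, μ) be a probability space, V : Ω → ℝ measurable with μ({V ≤ t}) = t for every t ∈ [0,1], and let E be a measurable set with α := μ(E). For t ∈ [0,1] define q(t) := μ( ({V ≤ t} \ E) ∪ (E \ {V ≤ t}) ) (the probability that the misreported treatment equals 1 when the true treatment is 1{V ≤ t}). Then for all 0 ≤ p' ≤ p ≤ 1: (i) q(p) − q(p') ≤ p − p'; (ii) p − p' ≤ q(p) − q(p') + 2α; and (iii) p − p' ≤ 2(1 − α) − (q(p) − q(p')). -/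
open MeasureTheory

/-- With `V` uniform on `[0,1]` (i.e. `μ{V ≤ t} = t` for `t ∈ [0,1]`),
misreporting event `E` with `α = μ(E)`, and observed propensity
`q(t) = μ(({V ≤ t} \ E) ∪ (E \ {V ≤ t}))`, for all `0 ≤ p' ≤ p ≤ 1`:
(i) `q(p) - q(p') ≤ p - p'`; (ii) `p - p' ≤ q(p) - q(p') + 2α`;
(iii) `p - p' ≤ 2(1 - α) - (q(p) - q(p'))`. -/
theorem observed_propensity_difference_bounds
    {Ω : Type*} [MeasurableSpace Ω] (μ : Measure Ω) [IsProbabilityMeasure μ]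
    (V : Ω → ℝ) (hV : Measurable V)
    (hunif : ∀ t ∈ Set.Icc (0:ℝ) 1, (μ {ω | V ω ≤ t}).toReal = t)
    (E : Set Ω) (hE : MeasurableSet E)
    (α : ℝ) (hα : α = (μ E).toReal)
    (q : ℝ → ℝ)
    (hq : ∀ t, q t = (μ (({ω | V ω ≤ t} \ E) ∪ (E \ {ω | V ω ≤ t}))).toReal)
    (p' p : ℝ) (hp' : 0 ≤ p') (hpp : p' ≤ p) (hp : p ≤ 1) :
    q p - q p' ≤ p - p' ∧
      p - p' ≤ q p - q p' + 2 * α ∧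
      p - p' ≤ 2 * (1 - α) - (q p - q p') := by
  set A' : Set Ω := {ω | V ω ≤ p'} with hA'def
  set A : Set Ω := {ω | V ω ≤ p} with hAdef
  have hmA' : MeasurableSet A' := measurableSet_le hV measurable_const
  have hmA : MeasurableSet A := measurableSet_le hV measurable_const
  have hsub : A' ⊆ A := fun ω hω => le_trans hω hpp
  have fin : ∀ s : Set Ω, μ s ≠ ⊤ := fun s => measure_ne_top μ s
  set a := (μ ((A \ A') \ E)).toReal with hadef
  set b := (μ ((A \ A') ∩ E)).toReal with hbdef
  set c := (μ (A' \ E)).toReal with hcdef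
  set d := (μ (E \ A)).toReal with hddef
  have hb0 : 0 ≤ b := ENNReal.toReal_nonneg
  have hbα : b ≤ α := by
    rw [hα]
    exact ENNReal.toReal_mono (fin _) (measure_mono Set.inter_subset_right)
  have haα : a ≤ 1 - α := by
    have h1 : μ ((A \ A') \ E) ≤ μ Eᶜ :=
      measure_mono (fun ω hω => hω.2)
    have h2 : (μ Eᶜ).toReal = 1 - α := by
      rw [measure_compl hE (fin E), measure_univ, hα,
        ENNReal.toReal_sub_of_le prob_le_one ENNReal.one_ne_top]
      simp
    calc a ≤ (μ Eᶜ).toReal := ENNReal.toReal_mono (fin _) h1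
      _ = 1 - α := h2
  -- a + b = p - p'
  have hAtr : (μ A).toReal = p := hunif p ⟨le_trans hp' hpp, hp⟩
  have hA'tr : (μ A').toReal = p' := hunif p' ⟨hp', le_trans hpp hp⟩
  have hab : a + b = p - p' := by
    have hsplit : ((A \ A') \ E) ∪ ((A \ A') ∩ E) = A \ A' := Set.diff_union_inter _ _
    have hdisj : Disjoint ((A \ A') \ E) ((A \ A') ∩ E) :=
      Set.disjoint_left.mpr fun ω h1 h2 => h1.2 h2.2
    have h1 : μ ((A \ A') \ E) + μ ((A \ A') ∩ E) = μ (A \ A') := by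
      rw [← measure_union hdisj ((hmA.diff hmA').inter hE), hsplit]
    have h2 : (μ (A \ A')).toReal = p - p' := by
      rw [measure_diff hsub hmA'.nullMeasurableSet (fin A'),
        ENNReal.toReal_sub_of_le (measure_mono hsub) (fin A), hAtr, hA'tr]
    rw [hadef, hbdef, ← ENNReal.toReal_add (fin _) (fin _), h1, h2]
  -- q p = a + c + d
  have hqp : q p = a + c + d := by
    have hAE : A \ E = ((A \ A') \ E) ∪ (A' \ E) := by
      rw [← Set.union_diff_distrib, Set.diff_union_of_subset hsub]
    have hd1 : Disjoint ((A \ A') \ E) (A' \ E) :=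
      Set.disjoint_left.mpr fun ω h1 h2 => h1.1.2 h2.1
    have hd2 : Disjoint (A \ E) (E \ A) :=
      Set.disjoint_left.mpr fun ω h1 h2 => h1.2 h2.1
    rw [hq p, measure_union hd2 (hE.diff hmA), hAE,
      measure_union hd1 (hmA'.diff hE),
      ENNReal.toReal_add (by finiteness) (fin _),
      ENNReal.toReal_add (fin _) (fin _)]
  -- q p' = c + d + b
  have hqp' : q p' = c + (d + b) := by
    have hEA' : E \ A' = (E \ A) ∪ ((A \ A') ∩ E) := by
      ext ω
      have h := @hsub ω
      simp only [Set.mem_diff, Set.mem_union, Set.mem_inter_iff]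
      tauto
    have hd1 : Disjoint (E \ A) ((A \ A') ∩ E) :=
      Set.disjoint_left.mpr fun ω h1 h2 => h1.2 h2.1.1
    have hd2 : Disjoint (A' \ E) (E \ A') :=
      Set.disjoint_left.mpr fun ω h1 h2 => h2.2 h1.1
    rw [hq p', measure_union hd2 (hE.diff hmA'), hEA',
      measure_union hd1 ((hmA.diff hmA').inter hE),
      ENNReal.toReal_add (fin _) (by finiteness),
      ENNReal.toReal_add (fin _) (fin _)]
  have hdiff : q p - q p' = a - b := by rw [hqp, hqp']; ring
  refine ⟨?_, ?_, ?_⟩ <;> linarith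
end

section
/- Let b ≥ 0 and let m1, m0 : ℝ → ℝ satisfy the smoothness assumption with constant b on [0,1]. Let 0 ≤ p0l ≤ p' ≤ p ≤ p1u ≤ 1 with p' < p, let v* ∈ [0,1], and set ΔY := ∫_{p'}^{p} (m1(v) − m0(v)) dv and I(v*) := ∫_{p0l}^{p1u} 2b·|v − v*| dv. Then |ΔY − (m1(v*) − m0(v*))·(p − p')| ≤ I(v*). -/
/-- Under misreporting, with identified bounds `p0l ≤ p' ≤ p ≤ p1u` on the true
propensity scores, the contrast `ΔY = ∫_{p'}^{p} (m1 - m0)` deviates from `MTE(v*)·(p - p')`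
by at most `I(v*) = ∫_{p0l}^{p1u} 2b|v - v*| dv`. -/
theorem mte_contrast_smoothness_bound_misreporting
    (b : ℝ) (hb : 0 ≤ b) (m1 m0 : ℝ → ℝ)
    (hm1 : ∀ v1 ∈ Set.Icc (0:ℝ) 1, ∀ v2 ∈ Set.Icc (0:ℝ) 1, |m1 v1 - m1 v2| ≤ b * |v1 - v2|)
    (hm0 : ∀ v1 ∈ Set.Icc (0:ℝ) 1, ∀ v2 ∈ Set.Icc (0:ℝ) 1, |m0 v1 - m0 v2| ≤ b * |v1 - v2|)
    (p0l p' p p1u : ℝ) (h0 : 0 ≤ p0l) (h1 : p0l ≤ p') (h2 : p' ≤ p) (h3 : p ≤ p1u)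
    (h4 : p1u ≤ 1) (hpp : p' < p)
    (vstar : ℝ) (hv : vstar ∈ Set.Icc (0:ℝ) 1)
    (ΔY I : ℝ) (hΔY : ΔY = ∫ v in p'..p, (m1 v - m0 v))
    (hI : I = ∫ v in p0l..p1u, 2 * b * |v - vstar|) :
    |ΔY - (m1 vstar - m0 vstar) * (p - p')| ≤ I := by
  have hsub : Set.uIcc p' p ⊆ Set.Icc (0:ℝ) 1 := by
    rw [Set.uIcc_of_le h2]
    exact Set.Icc_subset_Icc (le_trans h0 h1) (le_trans h3 h4)
  -- continuity of m1, m0 on [0,1]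
  have hcont : ∀ (m : ℝ → ℝ),
      (∀ v1 ∈ Set.Icc (0:ℝ) 1, ∀ v2 ∈ Set.Icc (0:ℝ) 1, |m v1 - m v2| ≤ b * |v1 - v2|) →
      ContinuousOn m (Set.Icc (0:ℝ) 1) := by
    intro m hm
    have : LipschitzOnWith (Real.toNNReal b) m (Set.Icc (0:ℝ) 1) := by
      rw [lipschitzOnWith_iff_dist_le_mul]
      intro x hx y hy
      simpa [Real.dist_eq, Real.coe_toNNReal b hb] using hm x hx y hy
    exact this.continuousOn
  have hc1 : ContinuousOn (fun v => m1 v - m0 v) (Set.uIcc p' p) :=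
    ((hcont m1 hm1).sub (hcont m0 hm0)).mono hsub
  have hint : IntervalIntegrable (fun v => m1 v - m0 v) MeasureTheory.volume p' p :=
    hc1.intervalIntegrable
  have hintg : IntervalIntegrable (fun v => 2 * b * |v - vstar|) MeasureTheory.volume p' p := by
    apply Continuous.intervalIntegrable
    exact continuous_const.mul ((continuous_id.sub continuous_const).abs)
  -- key pointwise bound
  have hbd : ∀ v ∈ Set.Icc (0:ℝ) 1,
      |(m1 v - m0 v) - (m1 vstar - m0 vstar)| ≤ 2 * b * |v - vstar| := by
    intro v hvv
    have h1' := hm1 v hvv vstar hv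
    have h0' := hm0 v hvv vstar hv
    calc |(m1 v - m0 v) - (m1 vstar - m0 vstar)|
        = |(m1 v - m1 vstar) - (m0 v - m0 vstar)| := by ring_nf
      _ ≤ |m1 v - m1 vstar| + |m0 v - m0 vstar| := abs_sub _ _
      _ ≤ b * |v - vstar| + b * |v - vstar| := add_le_add h1' h0'
      _ = 2 * b * |v - vstar| := by ring
  -- rewrite the difference as an integral
  have hrw : ΔY - (m1 vstar - m0 vstar) * (p - p')
      = ∫ v in p'..p, ((m1 v - m0 v) - (m1 vstar - m0 vstar)) := by
    rw [hΔY, intervalIntegral.integral_sub hint (intervalIntegrable_const),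
      intervalIntegral.integral_const, smul_eq_mul, mul_comm]
  rw [hrw]
  have hstep : |∫ v in p'..p, ((m1 v - m0 v) - (m1 vstar - m0 vstar))|
      ≤ ∫ v in p'..p, 2 * b * |v - vstar| := by
    refine le_trans (intervalIntegral.abs_integral_le_integral_abs
      (f := fun v => (m1 v - m0 v) - (m1 vstar - m0 vstar)) (μ := MeasureTheory.volume) h2) ?_
    apply intervalIntegral.integral_mono_on h2 ((hint.sub intervalIntegrable_const).abs) hintg
    intro v hvv
    exact hbd v (hsub (by rw [Set.uIcc_of_le h2]; exact hvv))
  refine le_trans hstep ?_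
  rw [hI]
  have hg : ∀ a c : ℝ, IntervalIntegrable (fun v => 2 * b * |v - vstar|) MeasureTheory.volume a c := by
    intro a c
    apply Continuous.intervalIntegrable
    exact continuous_const.mul ((continuous_id.sub continuous_const).abs)
  have hnn : ∀ a c : ℝ, a ≤ c → 0 ≤ ∫ v in a..c, 2 * b * |v - vstar| := by
    intro a c hac
    apply intervalIntegral.integral_nonneg hac
    intro u _
    positivity
  have e1 : (∫ v in p0l..p1u, 2 * b * |v - vstar|)
      = (∫ v in p0l..p', 2 * b * |v - vstar|) + (∫ v in p'..p, 2 * b * |v - vstar|)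
        + (∫ v in p..p1u, 2 * b * |v - vstar|) := by
    rw [intervalIntegral.integral_add_adjacent_intervals (hg p0l p') (hg p' p),
      intervalIntegral.integral_add_adjacent_intervals (hg p0l p) (hg p p1u)]
  rw [e1]
  have := hnn p0l p' h1
  have := hnn p p1u h3
  linarith
end

section
/- Let b ≥ 0 and let m1, m0 : ℝ → ℝ satisfy the smoothness assumption with constant b on [0,1]. Let 0 ≤ p0l ≤ p' ≤ p ≤ p1u ≤ 1 with p' < p, let v* ∈ [0,1], and set ΔY := ∫_{p'}^{p} (m1(v) − m0(v)) dv and I(v*) := ∫_{p0l}^{p1u} 2b·|v − v*| dv. If ΔY − I(v*) ≥ 0, then m1(v*) − m0(v*) ≥ 0. -/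
/-- Sufficient condition for a nonnegative MTE sign under misreporting:
if `ΔY - I(v*) ≥ 0` with `I(v*) = ∫_{p0l}^{p1u} 2b|v - v*| dv`, then `MTE(v*) ≥ 0`. -/
theorem mte_nonneg_sign_identification
    (b : ℝ) (hb : 0 ≤ b) (m1 m0 : ℝ → ℝ)
    (hm1 : ∀ v1 ∈ Set.Icc (0:ℝ) 1, ∀ v2 ∈ Set.Icc (0:ℝ) 1, |m1 v1 - m1 v2| ≤ b * |v1 - v2|)
    (hm0 : ∀ v1 ∈ Set.Icc (0:ℝ) 1, ∀ v2 ∈ Set.Icc (0:ℝ) 1, |m0 v1 - m0 v2| ≤ b * |v1 - v2|)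
    (p0l p' p p1u : ℝ) (h0 : 0 ≤ p0l) (h1 : p0l ≤ p') (h2 : p' ≤ p) (h3 : p ≤ p1u)
    (h4 : p1u ≤ 1) (hpp : p' < p)
    (vstar : ℝ) (hv : vstar ∈ Set.Icc (0:ℝ) 1)
    (ΔY I : ℝ) (hΔY : ΔY = ∫ v in p'..p, (m1 v - m0 v))
    (hI : I = ∫ v in p0l..p1u, 2 * b * |v - vstar|)
    (hsign : 0 ≤ ΔY - I) :
    0 ≤ m1 vstar - m0 vstar := by
  set M : ℝ → ℝ := fun v => m1 v - m0 v with hM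
  -- subset facts
  have hsub : Set.uIcc p' p ⊆ Set.Icc (0:ℝ) 1 := by
    rw [Set.uIcc_of_le h2]
    exact Set.Icc_subset_Icc (le_trans h0 h1) (le_trans h3 h4)
  -- continuity of m1, m0 on [0,1] via Lipschitz
  have hcont1 : ContinuousOn m1 (Set.Icc (0:ℝ) 1) := by
    have : LipschitzOnWith b.toNNReal m1 (Set.Icc (0:ℝ) 1) := by
      apply LipschitzOnWith.of_dist_le_mul
      intro x hx y hy
      simpa [Real.dist_eq, Real.coe_toNNReal b hb] using hm1 x hx y hy
    exact this.continuousOn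
  have hcont0 : ContinuousOn m0 (Set.Icc (0:ℝ) 1) := by
    have : LipschitzOnWith b.toNNReal m0 (Set.Icc (0:ℝ) 1) := by
      apply LipschitzOnWith.of_dist_le_mul
      intro x hx y hy
      simpa [Real.dist_eq, Real.coe_toNNReal b hb] using hm0 x hx y hy
    exact this.continuousOn
  have hcontM : ContinuousOn M (Set.Icc (0:ℝ) 1) := hcont1.sub hcont0
  have hintM : IntervalIntegrable M MeasureTheory.volume p' p :=
    (hcontM.mono hsub).intervalIntegrable
  have hcontG : Continuous (fun v : ℝ => 2 * b * |v - vstar|) := by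
    continuity
  have hintG : IntervalIntegrable (fun v : ℝ => 2 * b * |v - vstar|)
      MeasureTheory.volume p' p := hcontG.intervalIntegrable _ _
  -- pointwise bound: M v ≤ M vstar + 2b|v - vstar| on [0,1]
  have hpt : ∀ v ∈ Set.Icc (0:ℝ) 1, M v ≤ M vstar + 2 * b * |v - vstar| := by
    intro v hvm
    have h1' := hm1 v hvm vstar hv
    have h0' := hm0 v hvm vstar hv
    have a1 : m1 v - m1 vstar ≤ b * |v - vstar| := (abs_le.mp h1').2
    have a0 : m0 vstar - m0 v ≤ b * |v - vstar| := by
      have := (abs_le.mp h0').1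
      linarith
    simp only [hM]
    linarith
  -- ΔY ≤ (p - p') * M vstar + ∫_{p'}^{p} 2b|v - vstar|
  have hmono : (∫ v in p'..p, M v) ≤
      ∫ v in p'..p, (M vstar + 2 * b * |v - vstar|) := by
    apply intervalIntegral.integral_mono_on h2 hintM
    · exact (intervalIntegrable_const).add hintG
    · intro x hx
      exact hpt x (Set.mem_of_mem_of_subset (by rw [Set.uIcc_of_le h2] at hsub; exact hx)
        (by rw [Set.uIcc_of_le h2] at hsub; exact hsub))
  have hsplit : (∫ v in p'..p, (M vstar + 2 * b * |v - vstar|))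
      = (p - p') * M vstar + ∫ v in p'..p, 2 * b * |v - vstar| := by
    rw [intervalIntegral.integral_add intervalIntegrable_const hintG,
      intervalIntegral.integral_const, smul_eq_mul]
  -- ∫_{p'}^{p} 2b|v - vstar| ≤ I
  have hII : (∫ v in p'..p, 2 * b * |v - vstar|) ≤ I := by
    rw [hI]
    apply intervalIntegral.integral_mono_interval h1 h2 h3
    · filter_upwards with x
      simp only [Pi.zero_apply]
      positivity
    · exact hcontG.intervalIntegrable _ _
  have key : 0 ≤ (p - p') * M vstar := by
    have : ΔY ≤ (p - p') * M vstar + I := by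
      rw [hΔY]
      calc (∫ v in p'..p, M v) ≤ (p - p') * M vstar + ∫ v in p'..p, 2 * b * |v - vstar| := by
            rw [← hsplit]; exact hmono
        _ ≤ (p - p') * M vstar + I := by linarith
    linarith
  have hpos : 0 < p - p' := by linarith
  have hnn : 0 ≤ M vstar := nonneg_of_mul_nonneg_right key hpos
  simpa [hM] using hnn
end

section
/- Let b ≥ 0 and let m1, m0 : ℝ → ℝ satisfy the smoothness assumption with constant b on [0,1]. Let 0 ≤ p0l ≤ p' ≤ p ≤ p1u ≤ 1 with p' < p, let v* ∈ [0,1], and set ΔY := ∫_{p'}^{p} (m1(v) − m0(v)) dv and I(v*) := ∫_{p0l}^{p1u} 2b·|v − v*| dv. If ΔY + I(v*) ≤ 0, then m1(v*) − m0(v*) ≤ 0. -/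
/-- Sufficient condition for a nonpositive MTE sign under misreporting:
if `ΔY + I(v*) ≤ 0` with `I(v*) = ∫_{p0l}^{p1u} 2b|v - v*| dv`, then `MTE(v*) ≤ 0`. -/
theorem mte_nonpos_sign_identification
    (b : ℝ) (hb : 0 ≤ b) (m1 m0 : ℝ → ℝ)
    (hm1 : ∀ v1 ∈ Set.Icc (0:ℝ) 1, ∀ v2 ∈ Set.Icc (0:ℝ) 1, |m1 v1 - m1 v2| ≤ b * |v1 - v2|)
    (hm0 : ∀ v1 ∈ Set.Icc (0:ℝ) 1, ∀ v2 ∈ Set.Icc (0:ℝ) 1, |m0 v1 - m0 v2| ≤ b * |v1 - v2|)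
    (p0l p' p p1u : ℝ) (h0 : 0 ≤ p0l) (h1 : p0l ≤ p') (h2 : p' ≤ p) (h3 : p ≤ p1u)
    (h4 : p1u ≤ 1) (hpp : p' < p)
    (vstar : ℝ) (hv : vstar ∈ Set.Icc (0:ℝ) 1)
    (ΔY I : ℝ) (hΔY : ΔY = ∫ v in p'..p, (m1 v - m0 v))
    (hI : I = ∫ v in p0l..p1u, 2 * b * |v - vstar|)
    (hsign : ΔY + I ≤ 0) :
    m1 vstar - m0 vstar ≤ 0 := by
  set C := m1 vstar - m0 vstar with hC
  set g : ℝ → ℝ := fun v => 2 * b * |v - vstar| with hg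
  have hIcc : Set.Icc p' p ⊆ Set.Icc (0:ℝ) 1 :=
    Set.Icc_subset_Icc (le_trans h0 h1) (le_trans h3 h4)
  -- continuity of g
  have hgc : Continuous g := by
    apply Continuous.mul continuous_const
    exact (continuous_id.sub continuous_const).abs
  have hgint : ∀ a c : ℝ, IntervalIntegrable g MeasureTheory.volume a c :=
    fun a c => hgc.intervalIntegrable a c
  have hgnn : ∀ v, 0 ≤ g v := fun v => by positivity
  -- MTE is Lipschitz on [0,1], hence continuous there
  have hlipMTE : ∀ v1 ∈ Set.Icc (0:ℝ) 1, ∀ v2 ∈ Set.Icc (0:ℝ) 1,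
      |(m1 v1 - m0 v1) - (m1 v2 - m0 v2)| ≤ (2*b) * |v1 - v2| := by
    intro v1 h1' v2 h2'
    have := abs_sub (m1 v1 - m1 v2) (m0 v1 - m0 v2)
    calc |(m1 v1 - m0 v1) - (m1 v2 - m0 v2)|
        = |(m1 v1 - m1 v2) - (m0 v1 - m0 v2)| := by ring_nf
      _ ≤ |m1 v1 - m1 v2| + |m0 v1 - m0 v2| := abs_sub _ _
      _ ≤ b * |v1 - v2| + b * |v1 - v2| := add_le_add (hm1 _ h1' _ h2') (hm0 _ h1' _ h2')
      _ = (2*b) * |v1 - v2| := by ring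
  have hlipOn : LipschitzOnWith (Real.toNNReal (2*b)) (fun v => m1 v - m0 v)
      (Set.Icc (0:ℝ) 1) := by
    apply LipschitzOnWith.of_dist_le_mul
    intro x hx y hy
    rw [Real.dist_eq, Real.dist_eq, Real.coe_toNNReal _ (by positivity : (0:ℝ) ≤ 2*b)]
    exact hlipMTE x hx y hy
  have hcontOn : ContinuousOn (fun v => m1 v - m0 v) (Set.Icc p' p) :=
    hlipOn.continuousOn.mono hIcc
  have hMTEint : IntervalIntegrable (fun v => m1 v - m0 v) MeasureTheory.volume p' p := by
    rw [intervalIntegrable_iff_integrableOn_Icc_of_le h2]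
    exact hcontOn.integrableOn_Icc
  -- pointwise lower bound
  have hpt : ∀ v ∈ Set.Icc p' p, C - g v ≤ m1 v - m0 v := by
    intro v hvv
    have h := hlipMTE vstar hv v (hIcc hvv)
    have h' := abs_le.mp h
    have : |vstar - v| = |v - vstar| := abs_sub_comm _ _
    simp only [hg, hC]
    nlinarith [h'.2, h'.1]
  -- integral comparison on [p', p]
  have hmono : (∫ v in p'..p, (C - g v)) ≤ ∫ v in p'..p, (m1 v - m0 v) := by
    apply intervalIntegral.integral_mono_on h2 _ hMTEint hpt
    exact (intervalIntegrable_const).sub (hgint p' p)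
  have hsplit : (∫ v in p'..p, (C - g v)) = (p - p') * C - ∫ v in p'..p, g v := by
    rw [intervalIntegral.integral_sub intervalIntegrable_const (hgint p' p)]
    simp [hC]
    ring
  -- enlarging integral of nonneg g
  have henl : (∫ v in p'..p, g v) ≤ ∫ v in p0l..p1u, g v := by
    have e1 : (∫ v in p0l..p1u, g v) =
        (∫ v in p0l..p', g v) + (∫ v in p'..p, g v) + (∫ v in p..p1u, g v) := by
      rw [intervalIntegral.integral_add_adjacent_intervals (hgint p0l p') (hgint p' p),
        intervalIntegral.integral_add_adjacent_intervals (hgint p0l p) (hgint p p1u)]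
    have n1 : 0 ≤ ∫ v in p0l..p', g v :=
      intervalIntegral.integral_nonneg h1 (fun v _ => hgnn v)
    have n2 : 0 ≤ ∫ v in p..p1u, g v :=
      intervalIntegral.integral_nonneg h3 (fun v _ => hgnn v)
    linarith [e1]
  have key : (p - p') * C ≤ ΔY + I := by
    rw [hΔY, hI]
    have : (∫ v in p0l..p1u, 2 * b * |v - vstar|) = ∫ v in p0l..p1u, g v := rfl
    rw [this]
    linarith [hmono, hsplit, henl]
  nlinarith [key, hsign, hpp]
end

section
/- (Theorem 3.1, part 1.) Let b ≥ 0 and let m1, m0 : ℝ → ℝ satisfy the smoothness assumption with constant b on [0,1]. Let 0 ≤ p0l ≤ p' ≤ p ≤ p1u ≤ 1, let Δpl, Δpu be constants with 0 < Δpl ≤ p − p' ≤ Δpu, let v* ∈ [0,1], and set ΔY := ∫_{p'}^{p} (m1(v) − m0(v)) dv and I(v*) := ∫_{p0l}^{p1u} 2b·|v − v*| dv. If ΔY − I(v*) ≥ 0, then (ΔY − I(v*))/Δpu ≤ m1(v*) − m0(v*) ≤ (ΔY + I(v*))/Δpl. -/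
/-- Theorem 3.1, part 1: If `ΔY - I(v*) ≥ 0`, then
`(ΔY - I(v*))/Δpu ≤ MTE(v*) ≤ (ΔY + I(v*))/Δpl`. -/
theorem mte_bounds_misreporting_nonneg_case
    (b : ℝ) (hb : 0 ≤ b) (m1 m0 : ℝ → ℝ)
    (hm1 : ∀ v1 ∈ Set.Icc (0:ℝ) 1, ∀ v2 ∈ Set.Icc (0:ℝ) 1, |m1 v1 - m1 v2| ≤ b * |v1 - v2|)
    (hm0 : ∀ v1 ∈ Set.Icc (0:ℝ) 1, ∀ v2 ∈ Set.Icc (0:ℝ) 1, |m0 v1 - m0 v2| ≤ b * |v1 - v2|)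
    (p0l p' p p1u : ℝ) (h0 : 0 ≤ p0l) (h1 : p0l ≤ p') (h2 : p' ≤ p) (h3 : p ≤ p1u)
    (h4 : p1u ≤ 1)
    (Δpl Δpu : ℝ) (hΔpl0 : 0 < Δpl) (hΔpl : Δpl ≤ p - p') (hΔpu : p - p' ≤ Δpu)
    (vstar : ℝ) (hv : vstar ∈ Set.Icc (0:ℝ) 1)
    (ΔY I : ℝ) (hΔY : ΔY = ∫ v in p'..p, (m1 v - m0 v))
    (hI : I = ∫ v in p0l..p1u, 2 * b * |v - vstar|)
    (hsign : 0 ≤ ΔY - I) :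
    (ΔY - I) / Δpu ≤ m1 vstar - m0 vstar ∧
      m1 vstar - m0 vstar ≤ (ΔY + I) / Δpl := by
  set c := m1 vstar - m0 vstar with hc
  have hp'0 : (0:ℝ) ≤ p' := le_trans h0 h1
  have hp1 : p ≤ 1 := le_trans h3 h4
  have hsub : Set.Icc p' p ⊆ Set.Icc (0:ℝ) 1 := Set.Icc_subset_Icc hp'0 hp1
  -- continuity of m1 and m0 on [0,1]
  have hlip : ∀ (m : ℝ → ℝ), (∀ v1 ∈ Set.Icc (0:ℝ) 1, ∀ v2 ∈ Set.Icc (0:ℝ) 1,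
      |m v1 - m v2| ≤ b * |v1 - v2|) → ContinuousOn m (Set.Icc (0:ℝ) 1) := by
    intro m hm
    have : LipschitzOnWith (Real.toNNReal b) m (Set.Icc (0:ℝ) 1) := by
      rw [lipschitzOnWith_iff_dist_le_mul]
      intro x hx y hy
      simpa [Real.dist_eq, Real.coe_toNNReal b hb] using hm x hx y hy
    exact this.continuousOn
  have hcf : ContinuousOn (fun v => m1 v - m0 v) (Set.Icc (0:ℝ) 1) :=
    (hlip m1 hm1).sub (hlip m0 hm0)
  have hint_f : IntervalIntegrable (fun v => m1 v - m0 v) MeasureTheory.volume p' p := by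
    apply ContinuousOn.intervalIntegrable
    apply hcf.mono
    rwa [Set.uIcc_of_le h2]
  have hgc : Continuous (fun v : ℝ => 2 * b * |v - vstar|) := by fun_prop
  have hgi : ∀ a b' : ℝ, IntervalIntegrable (fun v : ℝ => 2 * b * |v - vstar|)
      MeasureTheory.volume a b' := fun a b' => hgc.intervalIntegrable a b'
  have key : ∀ v ∈ Set.Icc (0:ℝ) 1, |(m1 v - m0 v) - c| ≤ 2 * b * |v - vstar| := by
    intro v hv'
    have h1' := hm1 v hv' vstar hv
    have h0' := hm0 v hv' vstar hv
    have heq : (m1 v - m0 v) - c = (m1 v - m1 vstar) - (m0 v - m0 vstar) := by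
      rw [hc]; ring
    rw [heq]
    calc |(m1 v - m1 vstar) - (m0 v - m0 vstar)|
        ≤ |m1 v - m1 vstar| + |m0 v - m0 vstar| := abs_sub _ _
      _ ≤ 2 * b * |v - vstar| := by linarith
  -- bound ΔY - (p - p') * c by the integral of g over [p', p]
  have hconst : (∫ _ in p'..p, c) = (p - p') * c := by
    simp only [intervalIntegral.integral_const, smul_eq_mul, hc]
    try ring
  have hsplit : ΔY - (p - p') * c = ∫ v in p'..p, ((m1 v - m0 v) - c) := by
    rw [hΔY, ← hconst, ← intervalIntegral.integral_sub hint_f (intervalIntegrable_const)]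
  have hub : ΔY - (p - p') * c ≤ ∫ v in p'..p, 2 * b * |v - vstar| := by
    rw [hsplit]
    apply intervalIntegral.integral_mono_on h2 (hint_f.sub intervalIntegrable_const) (hgi p' p)
    intro v hv'
    exact (le_abs_self _).trans (key v (hsub hv'))
  have hlb : -(∫ v in p'..p, 2 * b * |v - vstar|) ≤ ΔY - (p - p') * c := by
    rw [hsplit, ← intervalIntegral.integral_neg]
    apply intervalIntegral.integral_mono_on h2 ((hgi p' p).neg)
      (hint_f.sub intervalIntegrable_const)
    intro v hv'
    have := (neg_abs_le ((m1 v - m0 v) - c)).trans (le_abs_self _)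
    have hk := key v (hsub hv')
    simp only [Pi.neg_apply]
    nlinarith [neg_abs_le ((m1 v - m0 v) - c)]
  have hIg : (∫ v in p'..p, 2 * b * |v - vstar|) ≤ I := by
    rw [hI]
    apply intervalIntegral.integral_mono_interval h1 h2 h3
    · filter_upwards with v
      positivity
    · exact hgi p0l p1u
  have hI0 : 0 ≤ I := by
    rw [hI]
    apply intervalIntegral.integral_nonneg (h1.trans (h2.trans h3))
    intro v _
    positivity
  have hpp : 0 < p - p' := lt_of_lt_of_le hΔpl0 hΔpl
  have hA : ΔY - I ≤ (p - p') * c := by linarith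
  have hB : (p - p') * c ≤ ΔY + I := by linarith
  have hc0 : 0 ≤ c := by nlinarith
  constructor
  · rw [div_le_iff₀ (lt_of_lt_of_le hΔpl0 (hΔpl.trans hΔpu))]
    nlinarith
  · rw [le_div_iff₀ hΔpl0]
    nlinarith
end

section
/- (Theorem 3.1, part 2.) Let b ≥ 0 and let m1, m0 : ℝ → ℝ satisfy the smoothness assumption with constant b on [0,1]. Let 0 ≤ p0l ≤ p' ≤ p ≤ p1u ≤ 1, let Δpl, Δpu be constants with 0 < Δpl ≤ p − p' ≤ Δpu, let v* ∈ [0,1], and set ΔY := ∫_{p'}^{p} (m1(v) − m0(v)) dv and I(v*) := ∫_{p0l}^{p1u} 2b·|v − v*| dv. If ΔY + I(v*) ≤ 0, then (ΔY − I(v*))/Δpl ≤ m1(v*) − m0(v*) ≤ (ΔY + I(v*))/Δpu. -/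
/-!
Smoothness makes the MTE `2b`-Lipschitz on `[0,1]`, so `ΔY` differs from `(p - p') MTE(v*)`
by at most `∫_{p'}^{p} 2b|v - v*| ≤ I(v*)`. Thus `(p - p') MTE(v*) ∈ [ΔY - I, ΔY + I]`; as
`ΔY + I ≤ 0` this forces `MTE(v*) ≤ 0`, and for a nonpositive `MTE(v*)` the unknown length
`p - p'` may be replaced by `Δpl` in the lower bound and by `Δpu` in the upper one.
-/

open MeasureTheory Set

section LipschitzBound

variable {s : Set ℝ} {K : ℝ} {f g : ℝ → ℝ}

lemma continuousOn_of_abs_sub_le (hf : ∀ x ∈ s, ∀ y ∈ s, |f x - f y| ≤ K * |x - y|) :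
    ContinuousOn f s := by
  refine (LipschitzOnWith.of_dist_le_mul (K := K.toNNReal) fun x hx y hy => ?_).continuousOn
  rw [Real.dist_eq, Real.dist_eq, Real.coe_toNNReal']
  exact (hf x hx y hy).trans (mul_le_mul_of_nonneg_right (le_max_left _ _) (abs_nonneg _))

lemma abs_sub_sub_le_of_abs_sub_le (hf : ∀ x ∈ s, ∀ y ∈ s, |f x - f y| ≤ K * |x - y|)
    (hg : ∀ x ∈ s, ∀ y ∈ s, |g x - g y| ≤ K * |x - y|) :
    ∀ x ∈ s, ∀ y ∈ s, |(f x - g x) - (f y - g y)| ≤ 2 * K * |x - y| := fun x hx y hy =>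
  calc |(f x - g x) - (f y - g y)| = |(f x - f y) - (g x - g y)| := by ring_nf
    _ ≤ |f x - f y| + |g x - g y| := abs_sub _ _
    _ ≤ K * |x - y| + K * |x - y| := add_le_add (hf x hx y hy) (hg x hx y hy)
    _ = 2 * K * |x - y| := by ring

lemma abs_intervalIntegral_sub_mul_le (hf : ∀ x ∈ s, ∀ y ∈ s, |f x - f y| ≤ K * |x - y|)
    {a b c : ℝ} (hab : a ≤ b) (hs : Icc a b ⊆ s) (hc : c ∈ s) :
    |(∫ x in a..b, f x) - (b - a) * f c| ≤ ∫ x in a..b, K * |x - c| := by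
  have hint : IntervalIntegrable f volume a b :=
    ((continuousOn_of_abs_sub_le hf).mono (uIcc_of_le hab ▸ hs)).intervalIntegrable
  rw [← Real.norm_eq_abs, ← smul_eq_mul, ← intervalIntegral.integral_const,
    ← intervalIntegral.integral_sub hint intervalIntegrable_const]
  refine intervalIntegral.norm_integral_le_of_norm_le hab (ae_of_all _ fun x hx => ?_)
    ((by fun_prop : Continuous fun x => K * |x - c|).intervalIntegrable _ _)
  exact hf x (hs (Ioc_subset_Icc_self hx)) c hc

end LipschitzBound

section NonposQuotient

variable {α : Type*} [Field α] [LinearOrder α] [IsStrictOrderedRing α]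

lemma div_le_of_le_mul_of_nonpos {lo d dl x : α} (hdl : 0 < dl) (hd : dl ≤ d) (hx : x ≤ 0)
    (h : lo ≤ d * x) : lo / dl ≤ x := by
  rw [div_le_iff₀ hdl, mul_comm]
  exact h.trans (mul_le_mul_of_nonpos_right hd hx)

lemma le_div_of_mul_le_of_nonpos {hi d du x : α} (hd : 0 < d) (hdu : d ≤ du) (hx : x ≤ 0)
    (h : d * x ≤ hi) : x ≤ hi / du := by
  rw [le_div_iff₀ (hd.trans_le hdu), mul_comm]
  exact (mul_le_mul_of_nonpos_right hdu hx).trans h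

end NonposQuotient

/-- Theorem 3.1, part 2: If `ΔY + I(v*) ≤ 0`, then
`(ΔY - I(v*))/Δpl ≤ MTE(v*) ≤ (ΔY + I(v*))/Δpu`. -/
theorem mte_bounds_misreporting_nonpos_case
    (b : ℝ) (hb : 0 ≤ b) (m1 m0 : ℝ → ℝ)
    (hm1 : ∀ v1 ∈ Set.Icc (0:ℝ) 1, ∀ v2 ∈ Set.Icc (0:ℝ) 1, |m1 v1 - m1 v2| ≤ b * |v1 - v2|)
    (hm0 : ∀ v1 ∈ Set.Icc (0:ℝ) 1, ∀ v2 ∈ Set.Icc (0:ℝ) 1, |m0 v1 - m0 v2| ≤ b * |v1 - v2|)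
    (p0l p' p p1u : ℝ) (h0 : 0 ≤ p0l) (h1 : p0l ≤ p') (h2 : p' ≤ p) (h3 : p ≤ p1u)
    (h4 : p1u ≤ 1)
    (Δpl Δpu : ℝ) (hΔpl0 : 0 < Δpl) (hΔpl : Δpl ≤ p - p') (hΔpu : p - p' ≤ Δpu)
    (vstar : ℝ) (hv : vstar ∈ Set.Icc (0:ℝ) 1)
    (ΔY I : ℝ) (hΔY : ΔY = ∫ v in p'..p, (m1 v - m0 v))
    (hI : I = ∫ v in p0l..p1u, 2 * b * |v - vstar|)
    (hsign : ΔY + I ≤ 0) :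
    (ΔY - I) / Δpl ≤ m1 vstar - m0 vstar ∧
      m1 vstar - m0 vstar ≤ (ΔY + I) / Δpu := by
  have hdev := abs_intervalIntegral_sub_mul_le (abs_sub_sub_le_of_abs_sub_le hm1 hm0) h2
    (Icc_subset_Icc (h0.trans h1) (h3.trans h4)) hv
  have hwiden : ∫ v in p'..p, 2 * b * |v - vstar| ≤ I :=
    hI ▸ intervalIntegral.integral_mono_interval h1 h2 h3 (ae_of_all _ fun v => by positivity)
      ((by fun_prop : Continuous fun v => 2 * b * |v - vstar|).intervalIntegrable _ _)
  rw [← hΔY] at hdev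
  obtain ⟨hlo, hhi⟩ := abs_le.mp (hdev.trans hwiden)
  have hd : 0 < p - p' := hΔpl0.trans_le hΔpl
  have hmte : m1 vstar - m0 vstar ≤ 0 := nonpos_of_mul_nonpos_right (by linarith) hd
  exact ⟨div_le_of_le_mul_of_nonpos hΔpl0 hΔpl hmte (by linarith),
    le_div_of_mul_le_of_nonpos hd hΔpu hmte (by linarith)⟩
end

section
/- Let b ≥ 0 and let m1, m0 : ℝ → ℝ satisfy the monotone smoothness assumption with constant b on [0,1]. Let 0 ≤ p0l ≤ p' ≤ p ≤ p1u ≤ 1 with p' < p, let v* ∈ [0,1], and set ΔY := ∫_{p'}^{p} (m1(v) − m0(v)) dv and J(v*) := ∫_{p0l}^{p1u} b·|v − v*| dv. Then |ΔY − (m1(v*) − m0(v*))·(p − p')| ≤ J(v*). -/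
/-- Under the monotone smoothness assumption (monotonicity plus Lipschitz with
constant `b`), the contrast `ΔY` deviates from `MTE(v*)·(p - p')` by at most
`J(v*) = ∫_{p0l}^{p1u} b|v - v*| dv` (the slack term is halved from `2b` to `b`). -/
theorem mte_contrast_monotone_smoothness_bound
    (b : ℝ) (hb : 0 ≤ b) (m1 m0 : ℝ → ℝ)
    (hm1 : ∀ v1 ∈ Set.Icc (0:ℝ) 1, ∀ v2 ∈ Set.Icc (0:ℝ) 1, v2 ≤ v1 →
      0 ≤ m1 v1 - m1 v2 ∧ m1 v1 - m1 v2 ≤ b * (v1 - v2))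
    (hm0 : ∀ v1 ∈ Set.Icc (0:ℝ) 1, ∀ v2 ∈ Set.Icc (0:ℝ) 1, v2 ≤ v1 →
      0 ≤ m0 v1 - m0 v2 ∧ m0 v1 - m0 v2 ≤ b * (v1 - v2))
    (p0l p' p p1u : ℝ) (h0 : 0 ≤ p0l) (h1 : p0l ≤ p') (h2 : p' ≤ p) (h3 : p ≤ p1u)
    (h4 : p1u ≤ 1) (hpp : p' < p)
    (vstar : ℝ) (hv : vstar ∈ Set.Icc (0:ℝ) 1)
    (ΔY J : ℝ) (hΔY : ΔY = ∫ v in p'..p, (m1 v - m0 v))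
    (hJ : J = ∫ v in p0l..p1u, b * |v - vstar|) :
    |ΔY - (m1 vstar - m0 vstar) * (p - p')| ≤ J := by
  have hsub : Set.uIcc p' p ⊆ Set.Icc (0:ℝ) 1 := by
    rw [Set.uIcc_of_le h2]
    exact Set.Icc_subset_Icc (le_trans h0 h1) (le_trans h3 h4)
  have hmono1 : MonotoneOn m1 (Set.Icc (0:ℝ) 1) := fun x hx y hy hxy => by
    have := (hm1 y hy x hx hxy).1; linarith
  have hmono0 : MonotoneOn m0 (Set.Icc (0:ℝ) 1) := fun x hx y hy hxy => by
    have := (hm0 y hy x hx hxy).1; linarith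
  have hint1 : IntervalIntegrable m1 MeasureTheory.volume p' p :=
    (hmono1.mono hsub).intervalIntegrable
  have hint0 : IntervalIntegrable m0 MeasureTheory.volume p' p :=
    (hmono0.mono hsub).intervalIntegrable
  have hintF : IntervalIntegrable (fun v => m1 v - m0 v) MeasureTheory.volume p' p :=
    hint1.sub hint0
  have hintG : IntervalIntegrable
      (fun v => m1 v - m0 v - (m1 vstar - m0 vstar)) MeasureTheory.volume p' p :=
    hintF.sub intervalIntegrable_const
  have hcontB : ∀ a c : ℝ, IntervalIntegrable (fun v => b * |v - vstar|)
      MeasureTheory.volume a c := fun a c =>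
    (Continuous.mul continuous_const ((continuous_id.sub continuous_const).abs)).intervalIntegrable a c
  have hptw : ∀ v ∈ Set.Icc p' p, |m1 v - m0 v - (m1 vstar - m0 vstar)| ≤ b * |v - vstar| := by
    intro v hvv
    have hv01 : v ∈ Set.Icc (0:ℝ) 1 := hsub (by rw [Set.uIcc_of_le h2]; exact hvv)
    rcases le_total vstar v with hle | hle
    · have H1 := hm1 v hv01 vstar hv hle
      have H0 := hm0 v hv01 vstar hv hle
      rw [abs_of_nonneg (by linarith : (0:ℝ) ≤ v - vstar), abs_le]
      constructor <;> nlinarith [H1.1, H1.2, H0.1, H0.2]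
    · have H1 := hm1 vstar hv v hv01 hle
      have H0 := hm0 vstar hv v hv01 hle
      rw [abs_of_nonpos (by linarith : v - vstar ≤ 0), abs_le]
      constructor <;> nlinarith [H1.1, H1.2, H0.1, H0.2]
  have key : ΔY - (m1 vstar - m0 vstar) * (p - p')
      = ∫ v in p'..p, (m1 v - m0 v - (m1 vstar - m0 vstar)) := by
    rw [hΔY, intervalIntegral.integral_sub hintF intervalIntegrable_const,
      intervalIntegral.integral_const, smul_eq_mul]
    ring
  rw [key, hJ]
  have step1 : |∫ v in p'..p, (m1 v - m0 v - (m1 vstar - m0 vstar))|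
      ≤ ∫ v in p'..p, b * |v - vstar| := by
    calc |∫ v in p'..p, (m1 v - m0 v - (m1 vstar - m0 vstar))|
        ≤ ∫ v in p'..p, |m1 v - m0 v - (m1 vstar - m0 vstar)| :=
          intervalIntegral.abs_integral_le_integral_abs h2
      _ ≤ ∫ v in p'..p, b * |v - vstar| := by
          apply intervalIntegral.integral_mono_on h2 hintG.abs (hcontB p' p)
          exact hptw
  refine step1.trans ?_
  apply intervalIntegral.integral_mono_interval h1 h2 h3 ?_ (hcontB p0l p1u)
  filter_upwards with v
  exact mul_nonneg hb (abs_nonneg _)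
end

section
/- (Theorem A.1, part 1.) Let b ≥ 0 and let m1, m0 : ℝ → ℝ satisfy the monotone smoothness assumption with constant b on [0,1]. Let 0 ≤ p0l ≤ p' ≤ p ≤ p1u ≤ 1, let Δpl, Δpu be constants with 0 < Δpl ≤ p − p' ≤ Δpu, let v* ∈ [0,1], and set ΔY := ∫_{p'}^{p} (m1(v) − m0(v)) dv and J(v*) := ∫_{p0l}^{p1u} b·|v − v*| dv. If ΔY − J(v*) ≥ 0, then (ΔY − J(v*))/Δpu ≤ m1(v*) − m0(v*) ≤ (ΔY + J(v*))/Δpl. -/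
/-- Theorem A.1, part 1: Under the monotone smoothness assumption, if
`ΔY - J(v*) ≥ 0` then `(ΔY - J(v*))/Δpu ≤ MTE(v*) ≤ (ΔY + J(v*))/Δpl`. -/
theorem mte_bounds_monotone_smoothness_nonneg_case
    (b : ℝ) (hb : 0 ≤ b) (m1 m0 : ℝ → ℝ)
    (hm1 : ∀ v1 ∈ Set.Icc (0:ℝ) 1, ∀ v2 ∈ Set.Icc (0:ℝ) 1, v2 ≤ v1 →
      0 ≤ m1 v1 - m1 v2 ∧ m1 v1 - m1 v2 ≤ b * (v1 - v2))
    (hm0 : ∀ v1 ∈ Set.Icc (0:ℝ) 1, ∀ v2 ∈ Set.Icc (0:ℝ) 1, v2 ≤ v1 →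
      0 ≤ m0 v1 - m0 v2 ∧ m0 v1 - m0 v2 ≤ b * (v1 - v2))
    (p0l p' p p1u : ℝ) (h0 : 0 ≤ p0l) (h1 : p0l ≤ p') (h2 : p' ≤ p) (h3 : p ≤ p1u)
    (h4 : p1u ≤ 1)
    (Δpl Δpu : ℝ) (hΔpl0 : 0 < Δpl) (hΔpl : Δpl ≤ p - p') (hΔpu : p - p' ≤ Δpu)
    (vstar : ℝ) (hv : vstar ∈ Set.Icc (0:ℝ) 1)
    (ΔY J : ℝ) (hΔY : ΔY = ∫ v in p'..p, (m1 v - m0 v))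
    (hJ : J = ∫ v in p0l..p1u, b * |v - vstar|)
    (hsign : 0 ≤ ΔY - J) :
    (ΔY - J) / Δpu ≤ m1 vstar - m0 vstar ∧
      m1 vstar - m0 vstar ≤ (ΔY + J) / Δpl := by
  set M : ℝ := m1 vstar - m0 vstar with hM
  have hc : 0 < p - p' := lt_of_lt_of_le hΔpl0 hΔpl
  have h0p' : (0:ℝ) ≤ p' := le_trans h0 h1
  have hp1 : p ≤ 1 := le_trans h3 h4
  have hsub : Set.uIcc p' p ⊆ Set.Icc (0:ℝ) 1 := by
    rw [Set.uIcc_of_le h2]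
    exact Set.Icc_subset_Icc h0p' hp1
  have hmono1 : MonotoneOn m1 (Set.Icc (0:ℝ) 1) := fun x hx y hy hxy => by
    have := (hm1 y hy x hx hxy).1; linarith
  have hmono0 : MonotoneOn m0 (Set.Icc (0:ℝ) 1) := fun x hx y hy hxy => by
    have := (hm0 y hy x hx hxy).1; linarith
  have hint1 : IntervalIntegrable m1 MeasureTheory.volume p' p :=
    (hmono1.mono hsub).intervalIntegrable
  have hint0 : IntervalIntegrable m0 MeasureTheory.volume p' p :=
    (hmono0.mono hsub).intervalIntegrable
  have hcontb : Continuous (fun v : ℝ => b * |v - vstar|) :=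
    continuous_const.mul ((continuous_id.sub continuous_const).abs)
  -- pointwise bound
  have hpt : ∀ v ∈ Set.Icc (0:ℝ) 1, |m1 v - m0 v - M| ≤ b * |v - vstar| := by
    intro v hvI
    rcases le_total vstar v with h | h
    · have H1 := hm1 v hvI vstar hv h
      have H0 := hm0 v hvI vstar hv h
      rw [abs_of_nonneg (by linarith : (0:ℝ) ≤ v - vstar)]
      rw [abs_le]; constructor <;> [linarith [H0.2, H1.1]; linarith [H1.2, H0.1]]
    · have H1 := hm1 vstar hv v hvI h
      have H0 := hm0 vstar hv v hvI h
      rw [abs_of_nonpos (by linarith : v - vstar ≤ 0)]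
      rw [abs_le]; constructor <;> [linarith [H1.2, H0.1]; linarith [H0.2, H1.1]]
  -- integrand integrability for the difference
  have hintd : IntervalIntegrable (fun v => m1 v - m0 v - M) MeasureTheory.volume p' p :=
    (hint1.sub hint0).sub intervalIntegrable_const
  have hintb : IntervalIntegrable (fun v : ℝ => b * |v - vstar|) MeasureTheory.volume p' p :=
    hcontb.intervalIntegrable p' p
  have hIccsub : Set.Icc p' p ⊆ Set.Icc (0:ℝ) 1 := Set.Icc_subset_Icc h0p' hp1
  -- bound: |∫ (mte - M)| ≤ ∫ b|v-v*| over [p',p]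
  have hupper : (∫ v in p'..p, (m1 v - m0 v - M)) ≤ ∫ v in p'..p, b * |v - vstar| := by
    apply intervalIntegral.integral_mono_on h2 hintd hintb
    intro v hvI
    exact le_trans (le_abs_self _) (hpt v (hIccsub hvI))
  have hlower : (-(∫ v in p'..p, b * |v - vstar|)) ≤ ∫ v in p'..p, (m1 v - m0 v - M) := by
    rw [← intervalIntegral.integral_neg]
    apply intervalIntegral.integral_mono_on h2 (hcontb.intervalIntegrable p' p).neg hintd
    intro v hvI
    have h := neg_le_of_abs_le (hpt v (hIccsub hvI))
    simpa using h
  -- value of the integral of the difference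
  have hval : (∫ v in p'..p, (m1 v - m0 v - M)) = ΔY - (p - p') * M := by
    rw [intervalIntegral.integral_sub (hint1.sub hint0) intervalIntegrable_const,
      intervalIntegral.integral_const, hΔY, smul_eq_mul]
  -- ∫_{p'}^p b|v-v*| ≤ J
  have hbnonneg : ∀ x : ℝ, 0 ≤ b * |x - vstar| := fun x => mul_nonneg hb (abs_nonneg _)
  have hIb_le_J : (∫ v in p'..p, b * |v - vstar|) ≤ J := by
    have e1 : (∫ v in p0l..p', b * |v - vstar|) + (∫ v in p'..p1u, b * |v - vstar|)
        = ∫ v in p0l..p1u, b * |v - vstar| :=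
      intervalIntegral.integral_add_adjacent_intervals (hcontb.intervalIntegrable _ _)
        (hcontb.intervalIntegrable _ _)
    have e2 : (∫ v in p'..p, b * |v - vstar|) + (∫ v in p..p1u, b * |v - vstar|)
        = ∫ v in p'..p1u, b * |v - vstar| :=
      intervalIntegral.integral_add_adjacent_intervals (hcontb.intervalIntegrable _ _)
        (hcontb.intervalIntegrable _ _)
    have n1 : (0:ℝ) ≤ ∫ v in p0l..p', b * |v - vstar| :=
      intervalIntegral.integral_nonneg h1 (fun x _ => hbnonneg x)
    have n2 : (0:ℝ) ≤ ∫ v in p..p1u, b * |v - vstar| :=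
      intervalIntegral.integral_nonneg h3 (fun x _ => hbnonneg x)
    rw [hJ]; linarith
  have hIb_nonneg : (0:ℝ) ≤ ∫ v in p'..p, b * |v - vstar| :=
    intervalIntegral.integral_nonneg h2 (fun x _ => hbnonneg x)
  have hJ_nonneg : (0:ℝ) ≤ J := by
    rw [hJ]; exact intervalIntegral.integral_nonneg (by linarith) (fun x _ => hbnonneg x)
  -- key sandwich: ΔY - J ≤ (p-p')*M ≤ ΔY + J
  have key1 : ΔY - J ≤ (p - p') * M := by
    have := hupper; rw [hval] at this; linarith
  have key2 : (p - p') * M ≤ ΔY + J := by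
    have := hlower; rw [hval] at this; linarith
  constructor
  · have step1 : (ΔY - J) / Δpu ≤ (ΔY - J) / (p - p') :=
      div_le_div_of_nonneg_left hsign hc hΔpu
    have step2 : (ΔY - J) / (p - p') ≤ M := (div_le_iff₀ hc).mpr (by linarith [key1])
    linarith
  · have hYJ : 0 ≤ ΔY + J := by linarith
    have step2 : M ≤ (ΔY + J) / (p - p') := (le_div_iff₀ hc).mpr (by linarith [key2])
    have step1 : (ΔY + J) / (p - p') ≤ (ΔY + J) / Δpl :=
      div_le_div_of_nonneg_left hYJ hΔpl0 hΔpl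
    linarith
end

section
/- (Theorem A.1, part 2.) Let b ≥ 0 and let m1, m0 : ℝ → ℝ satisfy the monotone smoothness assumption with constant b on [0,1]. Let 0 ≤ p0l ≤ p' ≤ p ≤ p1u ≤ 1, let Δpl, Δpu be constants with 0 < Δpl ≤ p − p' ≤ Δpu, let v* ∈ [0,1], and set ΔY := ∫_{p'}^{p} (m1(v) − m0(v)) dv and J(v*) := ∫_{p0l}^{p1u} b·|v − v*| dv. If ΔY + J(v*) ≤ 0, then (ΔY − J(v*))/Δpl ≤ m1(v*) − m0(v*) ≤ (ΔY + J(v*))/Δpu. -/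
/-- Theorem A.1, part 2: Under the monotone smoothness assumption, if
`ΔY + J(v*) ≤ 0` then `(ΔY - J(v*))/Δpl ≤ MTE(v*) ≤ (ΔY + J(v*))/Δpu`. -/
theorem mte_bounds_monotone_smoothness_nonpos_case
    (b : ℝ) (hb : 0 ≤ b) (m1 m0 : ℝ → ℝ)
    (hm1 : ∀ v1 ∈ Set.Icc (0:ℝ) 1, ∀ v2 ∈ Set.Icc (0:ℝ) 1, v2 ≤ v1 →
      0 ≤ m1 v1 - m1 v2 ∧ m1 v1 - m1 v2 ≤ b * (v1 - v2))
    (hm0 : ∀ v1 ∈ Set.Icc (0:ℝ) 1, ∀ v2 ∈ Set.Icc (0:ℝ) 1, v2 ≤ v1 →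
      0 ≤ m0 v1 - m0 v2 ∧ m0 v1 - m0 v2 ≤ b * (v1 - v2))
    (p0l p' p p1u : ℝ) (h0 : 0 ≤ p0l) (h1 : p0l ≤ p') (h2 : p' ≤ p) (h3 : p ≤ p1u)
    (h4 : p1u ≤ 1)
    (Δpl Δpu : ℝ) (hΔpl0 : 0 < Δpl) (hΔpl : Δpl ≤ p - p') (hΔpu : p - p' ≤ Δpu)
    (vstar : ℝ) (hv : vstar ∈ Set.Icc (0:ℝ) 1)
    (ΔY J : ℝ) (hΔY : ΔY = ∫ v in p'..p, (m1 v - m0 v))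
    (hJ : J = ∫ v in p0l..p1u, b * |v - vstar|)
    (hsign : ΔY + J ≤ 0) :
    (ΔY - J) / Δpl ≤ m1 vstar - m0 vstar ∧
      m1 vstar - m0 vstar ≤ (ΔY + J) / Δpu := by
  set t := m1 vstar - m0 vstar with ht
  obtain ⟨hv0, hv1⟩ := hv
  have hsub : Set.Icc p' p ⊆ Set.Icc (0:ℝ) 1 := by
    intro x hx
    exact ⟨le_trans (le_trans h0 h1) hx.1, le_trans hx.2 (le_trans h3 h4)⟩
  -- pointwise Lipschitz-type bound
  have hlip : ∀ v ∈ Set.Icc p' p, |(m1 v - m0 v) - t| ≤ b * |v - vstar| := by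
    intro v hvmem
    have hv01 : v ∈ Set.Icc (0:ℝ) 1 := hsub hvmem
    rcases le_total vstar v with hle | hle
    · obtain ⟨a1, b1⟩ := hm1 v hv01 vstar ⟨hv0, hv1⟩ hle
      obtain ⟨a0, b0⟩ := hm0 v hv01 vstar ⟨hv0, hv1⟩ hle
      rw [abs_of_nonneg (by linarith : (0:ℝ) ≤ v - vstar)]
      rw [abs_le]; constructor <;> [nlinarith; nlinarith]
    · obtain ⟨a1, b1⟩ := hm1 vstar ⟨hv0, hv1⟩ v hv01 hle
      obtain ⟨a0, b0⟩ := hm0 vstar ⟨hv0, hv1⟩ v hv01 hle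
      rw [abs_of_nonpos (by linarith : v - vstar ≤ 0)]
      rw [abs_le]; constructor <;> [nlinarith; nlinarith]
  -- integrability
  have hmono1 : MonotoneOn m1 (Set.Icc p' p) := by
    intro x hx y hy hxy
    have := (hm1 y (hsub hy) x (hsub hx) hxy).1
    linarith
  have hmono0 : MonotoneOn m0 (Set.Icc p' p) := by
    intro x hx y hy hxy
    have := (hm0 y (hsub hy) x (hsub hx) hxy).1
    linarith
  have hint1 : IntervalIntegrable m1 MeasureTheory.volume p' p :=
    (hmono1.mono (by rw [Set.uIcc_of_le h2])).intervalIntegrable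
  have hint0 : IntervalIntegrable m0 MeasureTheory.volume p' p :=
    (hmono0.mono (by rw [Set.uIcc_of_le h2])).intervalIntegrable
  have hintf : IntervalIntegrable (fun v => m1 v - m0 v) MeasureTheory.volume p' p :=
    hint1.sub hint0
  have hintg : ∀ a c : ℝ, IntervalIntegrable (fun v => b * |v - vstar|)
      MeasureTheory.volume a c := by
    intro a c
    exact (Continuous.intervalIntegrable (by continuity) a c)
  have hintft : IntervalIntegrable (fun v => (m1 v - m0 v) - t) MeasureTheory.volume p' p :=
    hintf.sub intervalIntegrable_const
  -- J ≥ integral over [p',p] of b|v - vstar|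
  have hJnn : ∀ v : ℝ, 0 ≤ b * |v - vstar| := fun v => mul_nonneg hb (abs_nonneg _)
  have hJsub : (∫ v in p'..p, b * |v - vstar|) ≤ J := by
    rw [hJ]
    apply intervalIntegral.integral_mono_interval h1 h2 h3
    · filter_upwards with v using hJnn v
    · exact hintg p0l p1u
  -- |∫ (f - t)| ≤ J
  have hkey : |(∫ v in p'..p, ((m1 v - m0 v) - t))| ≤ J := by
    calc |(∫ v in p'..p, ((m1 v - m0 v) - t))|
        ≤ ∫ v in p'..p, |(m1 v - m0 v) - t| := by
          rw [← Real.norm_eq_abs]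
          refine le_trans (intervalIntegral.norm_integral_le_abs_integral_norm) ?_
          rw [abs_of_nonneg]
          · simp [Real.norm_eq_abs]
          · rw [intervalIntegral.integral_of_le h2]
            positivity
      _ ≤ ∫ v in p'..p, b * |v - vstar| := by
          apply intervalIntegral.integral_mono_on h2 hintft.abs (hintg p' p)
          intro v hvv
          exact hlip v hvv
      _ ≤ J := hJsub
  have hsplit : (∫ v in p'..p, ((m1 v - m0 v) - t)) = ΔY - (p - p') * t := by
    rw [intervalIntegral.integral_sub hintf intervalIntegrable_const,
      intervalIntegral.integral_const, hΔY, smul_eq_mul]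
  rw [abs_le] at hkey
  -- so ΔY - J ≤ (p - p') * t ≤ ΔY + J
  have hlow : ΔY - J ≤ (p - p') * t := by linarith
  have hup : (p - p') * t ≤ ΔY + J := by linarith
  have hpp : 0 < p - p' := lt_of_lt_of_le hΔpl0 hΔpl
  have ht0 : t ≤ 0 := by nlinarith
  have hΔpu0 : 0 < Δpu := lt_of_lt_of_le hΔpl0 (le_trans hΔpl hΔpu)
  refine ⟨?_, ?_⟩
  · rw [div_le_iff₀ hΔpl0]
    have := mul_le_mul_of_nonpos_right hΔpl ht0
    linarith
  · rw [le_div_iff₀ hΔpu0]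
    have := mul_le_mul_of_nonpos_right hΔpu ht0
    linarith
end

section
/- (Proposition A.1, part 1.) Let b ≥ 0 and let m1, m0 : ℝ → ℝ satisfy the smoothness assumption with constant b on [0,1], and let v* ∈ [0,1]. Let K ≥ 1 and for each k ∈ {1,…,K} let reals p'_k, p_k, p0l_k, p1u_k, Δlp_k, Δup_k satisfy 0 ≤ p0l_k ≤ p'_k ≤ p_k ≤ p1u_k ≤ 1 and 0 < Δlp_k ≤ p_k − p'_k ≤ Δup_k, and set ΔY_k := ∫_{p'_k}^{p_k} (m1(v) − m0(v)) dv and I_k := ∫_{p0l_k}^{p1u_k} 2b·|v − v*| dv. If there exists j with ΔY_j − I_j ≥ 0, then max_{k} (ΔY_k − I_k)/Δup_k ≤ m1(v*) − m0(v*) ≤ min_{k} (ΔY_k + I_k)/Δlp_k. -/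
/-- Proposition A.1, part 1: Intersected bounds with a multi-valued instrument.
If some pair `j` identifies a nonnegative sign (`ΔY_j - I_j ≥ 0`), then for every pair `k`,
`(ΔY_k - I_k)/Δup_k ≤ MTE(v*) ≤ (ΔY_k + I_k)/Δlp_k`; i.e. the max of the lower bounds
and the min of the upper bounds bracket `MTE(v*)`. -/
theorem mte_bounds_multivalued_instrument_nonneg_case
    (b : ℝ) (hb : 0 ≤ b) (m1 m0 : ℝ → ℝ)
    (hm1 : ∀ v1 ∈ Set.Icc (0:ℝ) 1, ∀ v2 ∈ Set.Icc (0:ℝ) 1, |m1 v1 - m1 v2| ≤ b * |v1 - v2|)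
    (hm0 : ∀ v1 ∈ Set.Icc (0:ℝ) 1, ∀ v2 ∈ Set.Icc (0:ℝ) 1, |m0 v1 - m0 v2| ≤ b * |v1 - v2|)
    (vstar : ℝ) (hv : vstar ∈ Set.Icc (0:ℝ) 1)
    (K : ℕ) (hK : 1 ≤ K)
    (p' p p0l p1u Δlp Δup : Fin K → ℝ)
    (h0 : ∀ k, 0 ≤ p0l k) (h1 : ∀ k, p0l k ≤ p' k) (h2 : ∀ k, p' k ≤ p k)
    (h3 : ∀ k, p k ≤ p1u k) (h4 : ∀ k, p1u k ≤ 1)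
    (hΔlp0 : ∀ k, 0 < Δlp k) (hΔlp : ∀ k, Δlp k ≤ p k - p' k) (hΔup : ∀ k, p k - p' k ≤ Δup k)
    (ΔY I : Fin K → ℝ)
    (hΔY : ∀ k, ΔY k = ∫ v in (p' k)..(p k), (m1 v - m0 v))
    (hI : ∀ k, I k = ∫ v in (p0l k)..(p1u k), 2 * b * |v - vstar|)
    (hsign : ∃ j, 0 ≤ ΔY j - I j) :
    (∀ k, (ΔY k - I k) / Δup k ≤ m1 vstar - m0 vstar) ∧
      (∀ k, m1 vstar - m0 vstar ≤ (ΔY k + I k) / Δlp k) := by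
  obtain ⟨j, hj⟩ := hsign
  have hbnn : ((Real.toNNReal b : NNReal) : ℝ) = b := Real.coe_toNNReal b hb
  have hc1 : ContinuousOn m1 (Set.Icc 0 1) := by
    apply LipschitzOnWith.continuousOn (K := Real.toNNReal b)
    rw [lipschitzOnWith_iff_dist_le_mul]
    intro x hx y hy
    rw [Real.dist_eq, Real.dist_eq, hbnn]
    exact hm1 x hx y hy
  have hc0 : ContinuousOn m0 (Set.Icc 0 1) := by
    apply LipschitzOnWith.continuousOn (K := Real.toNNReal b)
    rw [lipschitzOnWith_iff_dist_le_mul]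
    intro x hx y hy
    rw [Real.dist_eq, Real.dist_eq, hbnn]
    exact hm0 x hx y hy
  set M := m1 vstar - m0 vstar with hMdef
  have hf : ContinuousOn (fun v => m1 v - m0 v - M) (Set.Icc 0 1) :=
    (hc1.sub hc0).sub continuousOn_const
  have hg : Continuous (fun v : ℝ => 2 * b * |v - vstar|) := by
    exact continuous_const.mul ((continuous_id.sub continuous_const).abs)
  have key : ∀ k, |ΔY k - (p k - p' k) * M| ≤ I k := by
    intro k
    have hsub : Set.uIcc (p' k) (p k) ⊆ Set.Icc (0:ℝ) 1 := by
      rw [Set.uIcc_of_le (h2 k)]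
      exact Set.Icc_subset_Icc ((h0 k).trans (h1 k)) ((h3 k).trans (h4 k))
    have hint : IntervalIntegrable (fun v => m1 v - m0 v - M) MeasureTheory.volume (p' k) (p k) :=
      (hf.mono hsub).intervalIntegrable
    have hint2 : IntervalIntegrable (fun v => m1 v - m0 v) MeasureTheory.volume (p' k) (p k) :=
      (((hc1.sub hc0)).mono hsub).intervalIntegrable
    have heq : ΔY k - (p k - p' k) * M = ∫ v in (p' k)..(p k), (m1 v - m0 v - M) := by
      rw [hΔY k, intervalIntegral.integral_sub hint2 intervalIntegrable_const,
        intervalIntegral.integral_const, smul_eq_mul]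
    have hpt : ∀ v ∈ Set.Icc (p' k) (p k), |m1 v - m0 v - M| ≤ 2 * b * |v - vstar| := by
      intro v hvk
      have hv01 : v ∈ Set.Icc (0:ℝ) 1 := by
        constructor
        · exact ((h0 k).trans (h1 k)).trans hvk.1
        · exact hvk.2.trans ((h3 k).trans (h4 k))
      have e : m1 v - m0 v - M = (m1 v - m1 vstar) - (m0 v - m0 vstar) := by
        rw [hMdef]; ring
      calc |m1 v - m0 v - M| ≤ |m1 v - m1 vstar| + |m0 v - m0 vstar| := by
            rw [e]; exact abs_sub _ _
        _ ≤ b * |v - vstar| + b * |v - vstar| :=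
            add_le_add (hm1 v hv01 vstar hv) (hm0 v hv01 vstar hv)
        _ = 2 * b * |v - vstar| := by ring
    have habs : |∫ v in (p' k)..(p k), (m1 v - m0 v - M)| ≤
        ∫ v in (p' k)..(p k), |m1 v - m0 v - M| :=
      intervalIntegral.abs_integral_le_integral_abs (h2 k)
    have hmono : (∫ v in (p' k)..(p k), |m1 v - m0 v - M|) ≤
        ∫ v in (p' k)..(p k), 2 * b * |v - vstar| := by
      apply intervalIntegral.integral_mono_on (h2 k) hint.abs
        (hg.intervalIntegrable _ _) hpt
    have hbig : (∫ v in (p' k)..(p k), 2 * b * |v - vstar|) ≤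
        ∫ v in (p0l k)..(p1u k), 2 * b * |v - vstar| := by
      apply intervalIntegral.integral_mono_interval (h1 k) (h2 k) (h3 k)
      · filter_upwards with v
        positivity
      · exact hg.intervalIntegrable _ _
    rw [heq, hI k]
    exact habs.trans (hmono.trans hbig)
  have hineq : ∀ k, ΔY k - I k ≤ (p k - p' k) * M ∧ (p k - p' k) * M ≤ ΔY k + I k := by
    intro k
    have := abs_le.mp (key k)
    constructor <;> linarith [this.1, this.2]
  have hM0 : 0 ≤ M := by
    have h := (hineq j).1
    have hpos : 0 < p j - p' j := lt_of_lt_of_le (hΔlp0 j) (hΔlp j)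
    nlinarith
  constructor
  · intro k
    have hup : 0 < Δup k := lt_of_lt_of_le (hΔlp0 k) ((hΔlp k).trans (hΔup k))
    rw [div_le_iff₀ hup]
    calc ΔY k - I k ≤ (p k - p' k) * M := (hineq k).1
      _ ≤ Δup k * M := mul_le_mul_of_nonneg_right (hΔup k) hM0
      _ = M * Δup k := mul_comm _ _
  · intro k
    rw [le_div_iff₀ (hΔlp0 k)]
    calc M * Δlp k = Δlp k * M := mul_comm _ _
      _ ≤ (p k - p' k) * M := mul_le_mul_of_nonneg_right (hΔlp k) hM0
      _ ≤ ΔY k + I k := (hineq k).2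
end

section
/- (Proposition A.1, part 2.) Let b ≥ 0 and let m1, m0 : ℝ → ℝ satisfy the smoothness assumption with constant b on [0,1], and let v* ∈ [0,1]. Let K ≥ 1 and for each k ∈ {1,…,K} let reals p'_k, p_k, p0l_k, p1u_k, Δlp_k, Δup_k satisfy 0 ≤ p0l_k ≤ p'_k ≤ p_k ≤ p1u_k ≤ 1 and 0 < Δlp_k ≤ p_k − p'_k ≤ Δup_k, and set ΔY_k := ∫_{p'_k}^{p_k} (m1(v) − m0(v)) dv and I_k := ∫_{p0l_k}^{p1u_k} 2b·|v − v*| dv. If there exists j with ΔY_j + I_j ≤ 0, then max_{k} (ΔY_k − I_k)/Δlp_k ≤ m1(v*) − m0(v*) ≤ min_{k} (ΔY_k + I_k)/Δup_k. -/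
/-- Proposition A.1, part 2: Intersected bounds with a multi-valued instrument.
If some pair `j` identifies a nonpositive sign (`ΔY_j + I_j ≤ 0`), then for every pair `k`,
`(ΔY_k - I_k)/Δlp_k ≤ MTE(v*) ≤ (ΔY_k + I_k)/Δup_k`; i.e. the max of the lower bounds
and the min of the upper bounds bracket `MTE(v*)`. -/
theorem mte_bounds_multivalued_instrument_nonpos_case
    (b : ℝ) (hb : 0 ≤ b) (m1 m0 : ℝ → ℝ)
    (hm1 : ∀ v1 ∈ Set.Icc (0:ℝ) 1, ∀ v2 ∈ Set.Icc (0:ℝ) 1, |m1 v1 - m1 v2| ≤ b * |v1 - v2|)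
    (hm0 : ∀ v1 ∈ Set.Icc (0:ℝ) 1, ∀ v2 ∈ Set.Icc (0:ℝ) 1, |m0 v1 - m0 v2| ≤ b * |v1 - v2|)
    (vstar : ℝ) (hv : vstar ∈ Set.Icc (0:ℝ) 1)
    (K : ℕ) (hK : 1 ≤ K)
    (p' p p0l p1u Δlp Δup : Fin K → ℝ)
    (h0 : ∀ k, 0 ≤ p0l k) (h1 : ∀ k, p0l k ≤ p' k) (h2 : ∀ k, p' k ≤ p k)
    (h3 : ∀ k, p k ≤ p1u k) (h4 : ∀ k, p1u k ≤ 1)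
    (hΔlp0 : ∀ k, 0 < Δlp k) (hΔlp : ∀ k, Δlp k ≤ p k - p' k) (hΔup : ∀ k, p k - p' k ≤ Δup k)
    (ΔY I : Fin K → ℝ)
    (hΔY : ∀ k, ΔY k = ∫ v in (p' k)..(p k), (m1 v - m0 v))
    (hI : ∀ k, I k = ∫ v in (p0l k)..(p1u k), 2 * b * |v - vstar|)
    (hsign : ∃ j, ΔY j + I j ≤ 0) :
    (∀ k, (ΔY k - I k) / Δlp k ≤ m1 vstar - m0 vstar) ∧
      (∀ k, m1 vstar - m0 vstar ≤ (ΔY k + I k) / Δup k) := by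
  set M := m1 vstar - m0 vstar with hM
  -- pointwise bound on the deviation of the MTE from its value at vstar
  have hMTE : ∀ v ∈ Set.Icc (0:ℝ) 1, |m1 v - m0 v - M| ≤ 2 * b * |v - vstar| := by
    intro v hv'
    have e1 := hm1 v hv' vstar hv
    have e0 := hm0 v hv' vstar hv
    have : m1 v - m0 v - M = (m1 v - m1 vstar) - (m0 v - m0 vstar) := by ring
    rw [this]
    calc |(m1 v - m1 vstar) - (m0 v - m0 vstar)|
        ≤ |m1 v - m1 vstar| + |m0 v - m0 vstar| := abs_sub _ _
      _ ≤ b * |v - vstar| + b * |v - vstar| := add_le_add e1 e0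
      _ = 2 * b * |v - vstar| := by ring
  -- continuity of m1, m0 on [0,1]
  have hcont1 : ContinuousOn m1 (Set.Icc (0:ℝ) 1) := by
    refine (LipschitzOnWith.of_dist_le_mul (K := b.toNNReal) ?_).continuousOn
    intro x hx y hy
    simpa [Real.dist_eq, Real.coe_toNNReal b hb] using hm1 x hx y hy
  have hcont0 : ContinuousOn m0 (Set.Icc (0:ℝ) 1) := by
    refine (LipschitzOnWith.of_dist_le_mul (K := b.toNNReal) ?_).continuousOn
    intro x hx y hy
    simpa [Real.dist_eq, Real.coe_toNNReal b hb] using hm0 x hx y hy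
  have hgcont : Continuous (fun v : ℝ => 2 * b * |v - vstar|) :=
    continuous_const.mul ((continuous_id.sub continuous_const).abs)
  -- the key estimate for each k
  have key : ∀ k, |ΔY k - (p k - p' k) * M| ≤ I k := by
    intro k
    have hsub : Set.uIcc (p' k) (p k) ⊆ Set.Icc (0:ℝ) 1 := by
      rw [Set.uIcc_of_le (h2 k)]
      intro x hx
      exact ⟨le_trans (le_trans (h0 k) (h1 k)) hx.1,
        le_trans hx.2 (le_trans (h3 k) (h4 k))⟩
    have hf : IntervalIntegrable (fun v => m1 v - m0 v) MeasureTheory.volume (p' k) (p k) :=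
      ((hcont1.mono hsub).sub (hcont0.mono hsub)).intervalIntegrable
    have hfM : IntervalIntegrable (fun v => m1 v - m0 v - M) MeasureTheory.volume (p' k) (p k) :=
      hf.sub intervalIntegrable_const
    have hg : IntervalIntegrable (fun v : ℝ => 2 * b * |v - vstar|)
        MeasureTheory.volume (p' k) (p k) := hgcont.intervalIntegrable _ _
    have e1 : ΔY k - (p k - p' k) * M = ∫ v in (p' k)..(p k), (m1 v - m0 v - M) := by
      rw [hΔY k, intervalIntegral.integral_sub hf intervalIntegrable_const,
        intervalIntegral.integral_const, smul_eq_mul]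
    rw [e1]
    calc |∫ v in (p' k)..(p k), (m1 v - m0 v - M)|
        ≤ ∫ v in (p' k)..(p k), |m1 v - m0 v - M| :=
          intervalIntegral.abs_integral_le_integral_abs (h2 k)
      _ ≤ ∫ v in (p' k)..(p k), 2 * b * |v - vstar| := by
          refine intervalIntegral.integral_mono_on (h2 k) hfM.abs hg ?_
          intro v hvv
          exact hMTE v (hsub (by rwa [Set.uIcc_of_le (h2 k)]))
      _ ≤ I k := by
          rw [hI k]
          refine intervalIntegral.integral_mono_interval (h1 k) (h2 k) (h3 k) ?_
            (hgcont.intervalIntegrable _ _)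
          filter_upwards with v
          positivity
  have hMle : M ≤ 0 := by
    obtain ⟨j, hj⟩ := hsign
    have hkj := key j
    rw [abs_le] at hkj
    by_contra h
    push_neg at h
    nlinarith [hkj.2, hΔlp0 j, hΔlp j]
  constructor
  · intro k
    have hk := key k
    rw [abs_le] at hk
    rw [div_le_iff₀ (hΔlp0 k)]
    nlinarith [hk.1, hΔlp k]
  · intro k
    have hk := key k
    rw [abs_le] at hk
    have hup : 0 < Δup k := lt_of_lt_of_le (hΔlp0 k) (le_trans (hΔlp k) (hΔup k))
    rw [le_div_iff₀ hup]
    nlinarith [hk.2, hΔup k]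
end

section
/- Let μ1, a1, μ1', a1' be real numbers and let p, p' ∈ (0,1] with p ≠ p'. If ∫_0^{p} (μ1 + a1·v) dv = ∫_0^{p} (μ1' + a1'·v) dv and ∫_0^{p'} (μ1 + a1·v) dv = ∫_0^{p'} (μ1' + a1'·v) dv, then μ1 = μ1' and a1 = a1'. -/
lemma int_lin (m a p : ℝ) : (∫ v in (0:ℝ)..p, (m + a * v)) = m * p + a / 2 * p ^ 2 := by
  rw [intervalIntegral.integral_add (intervalIntegrable_const)
    ((intervalIntegral.intervalIntegrable_id).const_mul a)]
  rw [intervalIntegral.integral_const_mul, integral_id]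
  simp
  ring

/-- Brinch–Mogstad–Wiswall point identification of the linear MTR coefficients:
if `∫_0^{p} (μ1 + a1·v) dv = ∫_0^{p} (μ1' + a1'·v) dv` at two distinct propensity-score values
`p ≠ p'` in `(0,1]`, then `μ1 = μ1'` and `a1 = a1'`. -/
theorem linear_mtr_point_identification
    (μ1 a1 μ1' a1' : ℝ) (p p' : ℝ)
    (hp : p ∈ Set.Ioc (0:ℝ) 1) (hp' : p' ∈ Set.Ioc (0:ℝ) 1) (hne : p ≠ p')
    (h1 : (∫ v in (0:ℝ)..p, (μ1 + a1 * v)) = ∫ v in (0:ℝ)..p, (μ1' + a1' * v))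
    (h2 : (∫ v in (0:ℝ)..p', (μ1 + a1 * v)) = ∫ v in (0:ℝ)..p', (μ1' + a1' * v)) :
    μ1 = μ1' ∧ a1 = a1' := by
  rw [int_lin, int_lin] at h1 h2
  have hp0 := hp.1.ne'
  have hp'0 := hp'.1.ne'
  have hd : p - p' ≠ 0 := sub_ne_zero.mpr hne
  have e1 : (μ1 - μ1') + (a1 - a1') / 2 * p = 0 := by
    have h : p * ((μ1 - μ1') + (a1 - a1') / 2 * p) = 0 := by nlinarith [h1]
    rcases mul_eq_zero.mp h with h' | h'
    · exact absurd h' hp0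
    · exact h'
  have e2 : (μ1 - μ1') + (a1 - a1') / 2 * p' = 0 := by
    have h : p' * ((μ1 - μ1') + (a1 - a1') / 2 * p') = 0 := by nlinarith [h2]
    rcases mul_eq_zero.mp h with h' | h'
    · exact absurd h' hp'0
    · exact h'
  have ha : a1 = a1' := by
    have h : (a1 - a1') / 2 * (p - p') = 0 := by
      have := mul_sub ((a1 - a1') / 2) p p'
      linarith
    rcases mul_eq_zero.mp h with h' | h'
    · linarith
    · exact absurd h' hd
  refine ⟨?_, ha⟩
  rw [ha] at e1
  have := sub_eq_zero.mp (by linarith : μ1 - μ1' = 0)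
  linarith
end
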